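/- arXiv:2404.01274 — 3 statements merged into one kernel-verified Lean document; each statement's English description precedes it below -/
import Mathlib

section
/- For all $0 < \epsilon < 1/4$ there exists $n_0$ such that the following holds. Suppose $G = (U \cup W, E)$ is a bipartite graph with $|U|, |W| \geq n_0$, and both $U$ and $W$ are almost $\epsilon$-good with respect to $G$. Then $d_G(U,W) \in [0, 2\epsilon^{1/2}) \cup (1 - 2\epsilon^{1/2}, 1]$. -/
set_option maxHeartbeats 1000000


open scoped Classical
open Finset

lemma dc_fst {α : Type} (U W : Finset α) (E : α → α → Prop) :
    ((U ×ˢ W).filter fun p => E p.1 p.2).card = ∑ u ∈ U, (W.filter fun w => E u w).card := by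
  rw [Finset.card_filter, Finset.sum_product]
  exact Finset.sum_congr rfl fun u _ => (Finset.card_filter _ _).symm

lemma dc_snd {α : Type} (U W : Finset α) (E : α → α → Prop) :
    ((U ×ˢ W).filter fun p => E p.1 p.2).card = ∑ w ∈ W, (U.filter fun u => E u w).card := by
  rw [Finset.card_filter, Finset.sum_product, Finset.sum_comm]
  exact Finset.sum_congr rfl fun u _ => (Finset.card_filter _ _).symm

lemma arith_key (ε s n m x y y' e : ℝ) (hε0 : 0 < ε) (hs0 : 0 < s) (hs2 : s^2 = ε)
    (hslt : s < 1/2) (hn0 : 0 < n) (hm0 : 0 < m)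
    (hx_le : x ≤ n) (hy'_le : y' ≤ m) (hx0 : 0 ≤ x) (hy'0 : 0 ≤ y')
    (h1 : e ≤ x * m + 2*ε*(n*m)) (h2 : y * ((1-ε)*n) ≤ e)
    (h3 : x * (y' - ε*m) ≤ ε*n*y') (h4 : (1-ε)*m ≤ y + y')
    (hd1 : 2*s*(n*m) ≤ e) (hd2 : e ≤ (1-2*s)*(n*m)) : False := by
  have hε1 : ε < 1/4 := by nlinarith
  have hεlts : ε < s := by nlinarith
  have hx_ge : (2 * s - 2 * ε) * n ≤ x := by
    have : (2 * s - 2 * ε) * n * m ≤ x * m := by nlinarith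
    exact le_of_mul_le_mul_right this hm0
  have hεs : 0 ≤ ε * (2 * s - ε) := mul_nonneg hε0.le (by linarith)
  have hy_le : y ≤ (1 + ε - 2 * s) * m := by
    have key : y * ((1 - ε) * n) ≤ (1 + ε - 2 * s) * m * ((1 - ε) * n) := by
      nlinarith [h2, hd2, mul_nonneg hεs (mul_pos hn0 hm0).le]
    have hpos : (0:ℝ) < (1 - ε) * n := by nlinarith
    exact le_of_mul_le_mul_right key hpos
  have hy'_ge : (2 * s - 2 * ε) * m ≤ y' := by linarith
  have ha : 2 * ε < 2 * s - 2 * ε := by nlinarith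
  have hk1 : 0 ≤ x - (2 * s - 2 * ε) * n := by linarith
  have hk2 : 0 ≤ y' - ε * m := by nlinarith
  have hk3 := mul_nonneg hk1 hk2
  nlinarith [hk3, h3,
    mul_le_mul_of_nonneg_left hy'_ge
      (mul_nonneg (by linarith : (0:ℝ) ≤ 2*s - 3*ε) hn0.le),
    mul_pos (mul_pos (by linarith : (0:ℝ) < 2*s - 2*ε)
      (by linarith : (0:ℝ) < 2*s - 4*ε)) (mul_pos hn0 hm0)]

/-- Lemma 2.3, Symmetry Lemma for graphs: for `0 < ε < 1/4` there
is `n₀` such that for any bipartite graph `G = (U ∪ W, E)` with `|U|,|W| ≥ n₀`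
in which both `U` and `W` are almost `ε`-good, the edge density `d_G(U,W)` lies
in `[0, 2√ε) ∪ (1-2√ε, 1]`. -/
theorem stmt_3 (ε : ℝ) (hε0 : 0 < ε) (hε1 : ε < 1/4) :
    ∃ n0 : ℕ, ∀ (α : Type) (U W : Finset α) (E : α → α → Prop),
      n0 ≤ U.card → n0 ≤ W.card →
      -- `U` is almost `ε`-good: most vertices of `W` see `U` homogeneously
      (∃ W' ⊆ W, (1 - ε) * (W.card : ℝ) ≤ (W'.card : ℝ) ∧ ∀ w ∈ W',
        ((U.filter fun u => E u w).card : ℝ) / (U.card : ℝ) < ε ∨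
        1 - ε < ((U.filter fun u => E u w).card : ℝ) / (U.card : ℝ)) →
      -- `W` is almost `ε`-good: most vertices of `U` see `W` homogeneously
      (∃ U' ⊆ U, (1 - ε) * (U.card : ℝ) ≤ (U'.card : ℝ) ∧ ∀ u ∈ U',
        ((W.filter fun w => E u w).card : ℝ) / (W.card : ℝ) < ε ∨
        1 - ε < ((W.filter fun w => E u w).card : ℝ) / (W.card : ℝ)) →
      ((((U ×ˢ W).filter fun p => E p.1 p.2).card : ℝ) / ((U.card : ℝ) * (W.card : ℝ)) < 2 * Real.sqrt ε ∨
        1 - 2 * Real.sqrt ε < (((U ×ˢ W).filter fun p => E p.1 p.2).card : ℝ) / ((U.card : ℝ) * (W.card : ℝ))) := by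
  have hs0 : 0 < Real.sqrt ε := Real.sqrt_pos.2 hε0
  have hs2 : Real.sqrt ε ^ 2 = ε := Real.sq_sqrt hε0.le
  have hslt : Real.sqrt ε < 1/2 := by nlinarith [hs2, hs0]
  refine ⟨1, ?_⟩
  rintro α U W E hU1 hW1 ⟨W', hW'sub, hW'card, hW'prop⟩ ⟨U', hU'sub, hU'card, hU'prop⟩
  by_contra hcon
  push_neg at hcon
  obtain ⟨hd1, hd2⟩ := hcon
  have hn0 : (0:ℝ) < (U.card : ℝ) := by exact_mod_cast Nat.lt_of_lt_of_le Nat.zero_lt_one hU1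
  have hm0 : (0:ℝ) < (W.card : ℝ) := by exact_mod_cast Nat.lt_of_lt_of_le Nat.zero_lt_one hW1
  have hnm : (0:ℝ) < (U.card : ℝ) * (W.card : ℝ) := mul_pos hn0 hm0
  have hd1' : 2 * Real.sqrt ε * ((U.card : ℝ) * (W.card : ℝ))
      ≤ ((((U ×ˢ W).filter fun p => E p.1 p.2).card : ℝ)) := (le_div_iff₀ hnm).1 hd1
  have hd2' : ((((U ×ˢ W).filter fun p => E p.1 p.2).card : ℝ))
      ≤ (1 - 2 * Real.sqrt ε) * ((U.card : ℝ) * (W.card : ℝ)) := (div_le_iff₀ hnm).1 hd2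
  classical
  -- high-degree vertex subsets
  set Uhi : Finset α := U'.filter (fun u => 1 - ε < ((W.filter fun w => E u w).card : ℝ) / (W.card : ℝ))
    with hUhi
  set Whi : Finset α := W'.filter (fun w => 1 - ε < ((U.filter fun u => E u w).card : ℝ) / (U.card : ℝ))
    with hWhi
  have hUhiU' : Uhi ⊆ U' := Finset.filter_subset _ _
  have hWhiW' : Whi ⊆ W' := Finset.filter_subset _ _
  have hUhiU : Uhi ⊆ U := hUhiU'.trans hU'sub
  have hWloW : (W' \ Whi) ⊆ W := Finset.sdiff_subset.trans hW'sub
  -- degree bounds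
  have hUhi_deg : ∀ u ∈ Uhi, (1 - ε) * (W.card : ℝ) < ((W.filter fun w => E u w).card : ℝ) := by
    intro u hu
    have h := (Finset.mem_filter.1 hu).2
    rwa [lt_div_iff₀ hm0] at h
  have hUlo_deg : ∀ u ∈ U' \ Uhi, ((W.filter fun w => E u w).card : ℝ) < ε * (W.card : ℝ) := by
    intro u hu
    obtain ⟨hu1, hu2⟩ := Finset.mem_sdiff.1 hu
    rcases hU'prop u hu1 with h | h
    · rwa [div_lt_iff₀ hm0] at h
    · exact absurd (Finset.mem_filter.2 ⟨hu1, h⟩) hu2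
  have hWhi_deg : ∀ w ∈ Whi, (1 - ε) * (U.card : ℝ) < ((U.filter fun u => E u w).card : ℝ) := by
    intro w hw
    have h := (Finset.mem_filter.1 hw).2
    rwa [lt_div_iff₀ hn0] at h
  have hWlo_deg : ∀ w ∈ W' \ Whi, ((U.filter fun u => E u w).card : ℝ) < ε * (U.card : ℝ) := by
    intro w hw
    obtain ⟨hw1, hw2⟩ := Finset.mem_sdiff.1 hw
    rcases hW'prop w hw1 with h | h
    · rwa [div_lt_iff₀ hn0] at h
    · exact absurd (Finset.mem_filter.2 ⟨hw1, h⟩) hw2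
  have hx_le : ((Uhi.card : ℕ) : ℝ) ≤ (U.card : ℝ) := by
    exact_mod_cast Finset.card_le_card hUhiU
  have hy'_le : (((W' \ Whi).card : ℕ) : ℝ) ≤ (W.card : ℝ) := by
    exact_mod_cast Finset.card_le_card hWloW
  -- (4)
  have h4 : (1 - ε) * (W.card : ℝ) ≤ (Whi.card : ℝ) + ((W' \ Whi).card : ℝ) := by
    have hcd : (W' \ Whi).card = W'.card - Whi.card := Finset.card_sdiff_of_subset hWhiW'
    have hle : Whi.card ≤ W'.card := Finset.card_le_card hWhiW'
    have heq : (Whi.card : ℝ) + ((W' \ Whi).card : ℝ) = (W'.card : ℝ) := by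
      rw [hcd]
      push_cast [hle]
      ring
    linarith [hW'card]
  -- (1)
  have h1 : ((((U ×ˢ W).filter fun p => E p.1 p.2).card : ℝ))
      ≤ (Uhi.card : ℝ) * (W.card : ℝ) + 2 * ε * ((U.card : ℝ) * (W.card : ℝ)) := by
    have hsum : ((((U ×ˢ W).filter fun p => E p.1 p.2).card : ℝ))
        = ∑ u ∈ U, ((W.filter fun w => E u w).card : ℝ) := by
      exact_mod_cast dc_fst U W E
    have hsplit1 : ∑ u ∈ U, ((W.filter fun w => E u w).card : ℝ)
        = ∑ u ∈ U \ U', ((W.filter fun w => E u w).card : ℝ)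
          + ∑ u ∈ U', ((W.filter fun w => E u w).card : ℝ) :=
      (Finset.sum_sdiff hU'sub).symm
    have hsplit2 : ∑ u ∈ U', ((W.filter fun w => E u w).card : ℝ)
        = ∑ u ∈ U' \ Uhi, ((W.filter fun w => E u w).card : ℝ)
          + ∑ u ∈ Uhi, ((W.filter fun w => E u w).card : ℝ) :=
      (Finset.sum_sdiff hUhiU').symm
    have hb1 : ∑ u ∈ Uhi, ((W.filter fun w => E u w).card : ℝ)
        ≤ (Uhi.card : ℝ) * (W.card : ℝ) := by
      have hterm : ∀ u ∈ Uhi, ((W.filter fun w => E u w).card : ℝ) ≤ (W.card : ℝ) := by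
        intro u _
        have : (W.filter fun w => E u w).card ≤ W.card :=
          Finset.card_le_card (Finset.filter_subset _ _)
        exact_mod_cast this
      calc ∑ u ∈ Uhi, ((W.filter fun w => E u w).card : ℝ)
          ≤ ∑ _u ∈ Uhi, (W.card : ℝ) := Finset.sum_le_sum hterm
        _ = (Uhi.card : ℝ) * (W.card : ℝ) := by rw [Finset.sum_const]; push_cast; ring
    have hb2 : ∑ u ∈ U' \ Uhi, ((W.filter fun w => E u w).card : ℝ)
        ≤ ε * (W.card : ℝ) * ((U' \ Uhi).card : ℝ) := by
      calc ∑ u ∈ U' \ Uhi, ((W.filter fun w => E u w).card : ℝ)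
          ≤ ∑ _u ∈ U' \ Uhi, ε * (W.card : ℝ) :=
            Finset.sum_le_sum (fun u hu => (hUlo_deg u hu).le)
        _ = ε * (W.card : ℝ) * ((U' \ Uhi).card : ℝ) := by
            rw [Finset.sum_const]; push_cast; ring
    have hb2' : ((U' \ Uhi).card : ℝ) ≤ (U.card : ℝ) := by
      exact_mod_cast Finset.card_le_card (Finset.sdiff_subset.trans hU'sub)
    have hb3 : ∑ u ∈ U \ U', ((W.filter fun w => E u w).card : ℝ)
        ≤ ((U \ U').card : ℝ) * (W.card : ℝ) := by
      have hterm : ∀ u ∈ U \ U', ((W.filter fun w => E u w).card : ℝ) ≤ (W.card : ℝ) := by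
        intro u _
        have : (W.filter fun w => E u w).card ≤ W.card :=
          Finset.card_le_card (Finset.filter_subset _ _)
        exact_mod_cast this
      calc ∑ u ∈ U \ U', ((W.filter fun w => E u w).card : ℝ)
          ≤ ∑ _u ∈ U \ U', (W.card : ℝ) := Finset.sum_le_sum hterm
        _ = ((U \ U').card : ℝ) * (W.card : ℝ) := by rw [Finset.sum_const]; push_cast; ring
    have hb3' : ((U \ U').card : ℝ) ≤ ε * (U.card : ℝ) := by
      have hcd : (U \ U').card = U.card - U'.card := Finset.card_sdiff_of_subset hU'sub
      have hle : U'.card ≤ U.card := Finset.card_le_card hU'sub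
      have heq : ((U \ U').card : ℝ) = (U.card : ℝ) - (U'.card : ℝ) := by
        rw [hcd]; push_cast [hle]; ring
      rw [heq]; linarith [hU'card]
    have hεm : (0:ℝ) ≤ ε * (W.card : ℝ) := by positivity
    nlinarith [hb2, hb2', hb3, hb3', hm0.le]
  -- (2)
  have h2 : (Whi.card : ℝ) * ((1 - ε) * (U.card : ℝ))
      ≤ ((((U ×ˢ W).filter fun p => E p.1 p.2).card : ℝ)) := by
    have hsum : ((((U ×ˢ W).filter fun p => E p.1 p.2).card : ℝ))
        = ∑ w ∈ W, ((U.filter fun u => E u w).card : ℝ) := by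
      exact_mod_cast dc_snd U W E
    have hsub : ∑ w ∈ Whi, ((U.filter fun u => E u w).card : ℝ)
        ≤ ∑ w ∈ W, ((U.filter fun u => E u w).card : ℝ) :=
      Finset.sum_le_sum_of_subset_of_nonneg (hWhiW'.trans hW'sub)
        (fun _ _ _ => Nat.cast_nonneg _)
    have hlow : (Whi.card : ℝ) * ((1 - ε) * (U.card : ℝ))
        ≤ ∑ w ∈ Whi, ((U.filter fun u => E u w).card : ℝ) := by
      calc (Whi.card : ℝ) * ((1 - ε) * (U.card : ℝ))
          = ∑ _w ∈ Whi, (1 - ε) * (U.card : ℝ) := by rw [Finset.sum_const]; push_cast; ring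
        _ ≤ ∑ w ∈ Whi, ((U.filter fun u => E u w).card : ℝ) :=
            Finset.sum_le_sum (fun w hw => (hWhi_deg w hw).le)
    linarith
  -- (3)
  have h3 : (Uhi.card : ℝ) * (((W' \ Whi).card : ℝ) - ε * (W.card : ℝ))
      ≤ ε * (U.card : ℝ) * ((W' \ Whi).card : ℝ) := by
    have hupper : ((((Uhi ×ˢ (W' \ Whi)).filter fun p => E p.1 p.2).card : ℝ))
        ≤ ε * (U.card : ℝ) * ((W' \ Whi).card : ℝ) := by
      have hsum : ((((Uhi ×ˢ (W' \ Whi)).filter fun p => E p.1 p.2).card : ℝ))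
          = ∑ w ∈ W' \ Whi, ((Uhi.filter fun u => E u w).card : ℝ) := by
        exact_mod_cast dc_snd Uhi (W' \ Whi) E
      have hterm : ∀ w ∈ W' \ Whi, ((Uhi.filter fun u => E u w).card : ℝ) ≤ ε * (U.card : ℝ) := by
        intro w hw
        have hmono : (Uhi.filter fun u => E u w).card ≤ (U.filter fun u => E u w).card :=
          Finset.card_le_card (Finset.filter_subset_filter _ hUhiU)
        have hmono' : ((Uhi.filter fun u => E u w).card : ℝ)
            ≤ ((U.filter fun u => E u w).card : ℝ) := by exact_mod_cast hmono
        linarith [hWlo_deg w hw]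
      calc ((((Uhi ×ˢ (W' \ Whi)).filter fun p => E p.1 p.2).card : ℝ))
          = ∑ w ∈ W' \ Whi, ((Uhi.filter fun u => E u w).card : ℝ) := hsum
        _ ≤ ∑ _w ∈ W' \ Whi, ε * (U.card : ℝ) := Finset.sum_le_sum hterm
        _ = ε * (U.card : ℝ) * ((W' \ Whi).card : ℝ) := by
            rw [Finset.sum_const]; push_cast; ring
    have hlower : (Uhi.card : ℝ) * (((W' \ Whi).card : ℝ) - ε * (W.card : ℝ))
        ≤ ((((Uhi ×ˢ (W' \ Whi)).filter fun p => E p.1 p.2).card : ℝ)) := by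
      have hsum : ((((Uhi ×ˢ (W' \ Whi)).filter fun p => E p.1 p.2).card : ℝ))
          = ∑ u ∈ Uhi, (((W' \ Whi).filter fun w => E u w).card : ℝ) := by
        exact_mod_cast dc_fst Uhi (W' \ Whi) E
      have hterm : ∀ u ∈ Uhi, ((W' \ Whi).card : ℝ) - ε * (W.card : ℝ)
          ≤ (((W' \ Whi).filter fun w => E u w).card : ℝ) := by
        intro u hu
        have hposneg : ((W' \ Whi).filter fun w => E u w).card
            + ((W' \ Whi).filter fun w => ¬ E u w).card = (W' \ Whi).card :=
          Finset.card_filter_add_card_filter_not _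
        have hposnegW : (W.filter fun w => E u w).card
            + (W.filter fun w => ¬ E u w).card = W.card :=
          Finset.card_filter_add_card_filter_not _
        have hmono : ((W' \ Whi).filter fun w => ¬ E u w).card
            ≤ (W.filter fun w => ¬ E u w).card :=
          Finset.card_le_card (Finset.filter_subset_filter _ hWloW)
        have h1' : (((W' \ Whi).filter fun w => E u w).card : ℝ)
            + (((W' \ Whi).filter fun w => ¬ E u w).card : ℝ) = ((W' \ Whi).card : ℝ) := by
          exact_mod_cast hposneg
        have h2' : ((W.filter fun w => E u w).card : ℝ)
            + ((W.filter fun w => ¬ E u w).card : ℝ) = (W.card : ℝ) := by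
          exact_mod_cast hposnegW
        have h3' : (((W' \ Whi).filter fun w => ¬ E u w).card : ℝ)
            ≤ ((W.filter fun w => ¬ E u w).card : ℝ) := by exact_mod_cast hmono
        linarith [hUhi_deg u hu]
      calc (Uhi.card : ℝ) * (((W' \ Whi).card : ℝ) - ε * (W.card : ℝ))
          = ∑ _u ∈ Uhi, (((W' \ Whi).card : ℝ) - ε * (W.card : ℝ)) := by
            rw [Finset.sum_const]; push_cast; ring
        _ ≤ ∑ u ∈ Uhi, (((W' \ Whi).filter fun w => E u w).card : ℝ) :=
            Finset.sum_le_sum hterm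
        _ = ((((Uhi ×ˢ (W' \ Whi)).filter fun p => E p.1 p.2).card : ℝ)) := hsum.symm
    linarith
  exact arith_key _ _ _ _ _ _ _ _
    hε0 hs0 hs2 hslt hn0 hm0 hx_le hy'_le (Nat.cast_nonneg _) (Nat.cast_nonneg _)
    h1 h2 h3 h4 hd1' hd2'
end

section
/- Let $0 < \epsilon < 1/100$ and suppose $H = (V_1 \cup V_2 \cup V_3, E)$ is a tripartite $3$-uniform hypergraph (every edge has one vertex in each part) such that each of $V_1, V_2, V_3$ is almost $\epsilon$-good with respect to $H$. Then $d_H(V_1, V_2, V_3) \in [0, 4\epsilon^{1/16}) \cup (1 - 4\epsilon^{1/16}, 1]$. -/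
/-!
Call a pair `(y, z)` dense if almost all `x ∈ V₁` complete it to an edge, and let `G` be the
bipartite graph of dense pairs on `V₂ × V₃`. Since almost every pair is dense or sparse (goodness of
`V₁`), the density of `H` is that of `G` up to `2ε`.

Fix `y` and look at the bipartite link graph of `y` between `V₁` and `V₃`: almost every row `x` is
full or empty (goodness of `V₃`), almost every column `z` is full or empty (goodness of `V₁`), and
full rows and empty columns cannot both be numerous, since a full row meets almost every column and
an empty column meets almost no row; likewise for empty rows and full columns. Hence the full
columns, i.e. the `G`-neighbours of `y`, are either few or almost all. Averaging over `y` with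
Markov's inequality at level `√ε`, all but `6√ε |V₂|` vertices `y` have `G`-degree polarized at
level `√ε`, and the same holds for `z` by the goodness of `V₂`. The Symmetry Lemma for graphs then
polarizes the density of `G`, hence of `H`, to within `9√ε + 2ε < 4ε^{1/16}` of `0` or `1`.
-/

open scoped Classical
open Finset

section

variable {ι β γ : Type*}

def FewSatisfy (ε : ℝ) (s : Finset β) (p : β → Prop) : Prop :=
  (#{x ∈ s | p x} : ℝ) < ε * #s

def MostSatisfy (ε : ℝ) (s : Finset β) (p : β → Prop) : Prop :=
  (1 - ε) * #s < #{x ∈ s | p x}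

/-- `|{x ∈ s | p x}| / |s| ∈ [0, ε) ∪ (1 - ε, 1]`, with the division cleared so that nothing
degenerates when `s = ∅`. -/
def Polarized (ε : ℝ) (s : Finset β) (p : β → Prop) : Prop :=
  FewSatisfy ε s p ∨ MostSatisfy ε s p

section Polarized

variable {ε : ℝ} {s : Finset β} {p : β → Prop}

theorem cast_card_filter_not (s : Finset β) (p : β → Prop) [DecidablePred p]
    [∀ x, Decidable (¬p x)] :
    (#{x ∈ s | ¬p x} : ℝ) = #s - #{x ∈ s | p x} := by
  rw [eq_sub_iff_add_eq', ← Nat.cast_add, card_filter_add_card_filter_not]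

theorem mostSatisfy_not_iff : MostSatisfy ε s (fun x => ¬p x) ↔ FewSatisfy ε s p := by
  rw [MostSatisfy, FewSatisfy, cast_card_filter_not]
  constructor <;> intro h <;> linarith

theorem fewSatisfy_not_iff : FewSatisfy ε s (fun x => ¬p x) ↔ MostSatisfy ε s p := by
  rw [MostSatisfy, FewSatisfy, cast_card_filter_not]
  constructor <;> intro h <;> linarith

theorem polarized_not_iff : Polarized ε s (fun x => ¬p x) ↔ Polarized ε s p := by
  rw [Polarized, Polarized, mostSatisfy_not_iff, fewSatisfy_not_iff, or_comm]

theorem not_polarized_iff :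
    ¬Polarized ε s p ↔ ε * #s ≤ min (#{x ∈ s | p x} : ℝ) (#s - #{x ∈ s | p x}) := by
  simp only [Polarized, FewSatisfy, MostSatisfy, not_or, not_lt, le_min_iff]
  constructor <;> rintro ⟨h₁, h₂⟩ <;> constructor <;> linarith

theorem card_le_card_few_add_most_add_not_polarized (u : Finset ι) (ε : ℝ)
    (s : Finset β) (R : ι → β → Prop) :
    (#u : ℝ) ≤ #{i ∈ u | FewSatisfy ε s (R i)} + #{i ∈ u | MostSatisfy ε s (R i)} +
      #{i ∈ u | ¬Polarized ε s (R i)} := by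
  have hsplit := card_filter_add_card_filter_not (s := u) fun i => Polarized ε s (R i)
  have hunion : #{i ∈ u | Polarized ε s (R i)} ≤
      #{i ∈ u | FewSatisfy ε s (R i)} + #{i ∈ u | MostSatisfy ε s (R i)} := by
    refine (card_le_card fun i hi => ?_).trans (card_union_le _ _)
    rw [mem_filter] at hi
    rw [mem_union, mem_filter, mem_filter]
    exact hi.2.imp (⟨hi.1, ·⟩) (⟨hi.1, ·⟩)
  exact_mod_cast hsplit ▸ Nat.add_le_add_right hunion _

end Polarized

section Counting

theorem card_filter_product_eq_sum_fst (s : Finset β) (t : Finset γ) (r : β → γ → Prop)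
    [∀ x y, Decidable (r x y)] :
    #{p ∈ s ×ˢ t | r p.1 p.2} = ∑ x ∈ s, #{y ∈ t | r x y} := by
  simp only [card_filter, sum_product]

theorem card_filter_product_eq_sum_snd (s : Finset β) (t : Finset γ) (r : β → γ → Prop)
    [∀ x y, Decidable (r x y)] :
    #{p ∈ s ×ˢ t | r p.1 p.2} = ∑ y ∈ t, #{x ∈ s | r x y} := by
  rw [card_filter_product_eq_sum_fst]
  exact sum_card_bipartiteAbove_eq_sum_card_bipartiteBelow r

theorem card_mul_card_le_of_forall {A : Finset β} {S : Finset γ} (R : β → γ → Prop) {a b : ℝ}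
    (hA : ∀ x ∈ A, (#{z ∈ S | ¬R x z} : ℝ) ≤ a) (hS : ∀ z ∈ S, (#{x ∈ A | R x z} : ℝ) ≤ b) :
    (#A : ℝ) * #S ≤ #A * a + #S * b := by
  have hedges : ∑ x ∈ A, (#{z ∈ S | R x z} : ℝ) = ∑ z ∈ S, (#{x ∈ A | R x z} : ℝ) := by
    exact_mod_cast sum_card_bipartiteAbove_eq_sum_card_bipartiteBelow R
  calc (#A : ℝ) * #S = ∑ x ∈ A, ((#{z ∈ S | R x z} : ℝ) + #{z ∈ S | ¬R x z}) := by
        simp only [cast_card_filter_not, add_sub_cancel, sum_const, nsmul_eq_mul]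
    _ = ∑ z ∈ S, (#{x ∈ A | R x z} : ℝ) + ∑ x ∈ A, (#{z ∈ S | ¬R x z} : ℝ) := by
        rw [sum_add_distrib, hedges]
    _ ≤ #S * b + #A * a := by
        gcongr
        · simpa only [nsmul_eq_mul] using sum_le_card_nsmul S _ b hS
        · simpa only [nsmul_eq_mul] using sum_le_card_nsmul A _ a hA
    _ = #A * a + #S * b := add_comm _ _

variable (s : Finset β) (t : Finset γ) (R : β → γ → Prop) {ε : ℝ}

theorem card_mostSatisfy_mul_card_fewSatisfy_le :
    (#{y ∈ s | MostSatisfy ε t (R y)} : ℝ) * #{z ∈ t | FewSatisfy ε s (R · z)} ≤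
      #{y ∈ s | MostSatisfy ε t (R y)} * (ε * #t) +
        #{z ∈ t | FewSatisfy ε s (R · z)} * (ε * #s) := by
  refine card_mul_card_le_of_forall R (fun y hy => ?_) (fun z hz => ?_)
  · have hfew : (#{z ∈ t | ¬R y z} : ℝ) < ε * #t := by
      simpa only [FewSatisfy, filter_congr_decidable] using
        fewSatisfy_not_iff.mpr (mem_filter.mp hy).2
    exact le_trans (mod_cast card_le_card (filter_subset_filter _ (filter_subset _ _))) hfew.le
  · exact le_trans (mod_cast card_le_card (filter_subset_filter _ (filter_subset _ _)))
      (mem_filter.mp hz).2.le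

theorem card_mostSatisfy_mul_card_fewSatisfy_le_two_mul (hε : 0 ≤ ε) :
    (#{y ∈ s | MostSatisfy ε t (R y)} : ℝ) * #{z ∈ t | FewSatisfy ε s (R · z)} ≤
      2 * ε * #s * #t := by
  have hA : (#{y ∈ s | MostSatisfy ε t (R y)} : ℝ) ≤ #s := mod_cast card_filter_le _ _
  have hS : (#{z ∈ t | FewSatisfy ε s (R · z)} : ℝ) ≤ #t := mod_cast card_filter_le _ _
  have := card_mostSatisfy_mul_card_fewSatisfy_le s t R (ε := ε)
  nlinarith [mul_le_mul_of_nonneg_right hA (mul_nonneg hε (Nat.cast_nonneg #t : (0:ℝ) ≤ #t)),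
    mul_le_mul_of_nonneg_right hS (mul_nonneg hε (Nat.cast_nonneg #s : (0:ℝ) ≤ #s))]

end Counting

section Slice

variable {ε : ℝ}

theorem card_mul_min_card_mostSatisfy_le (X : Finset β) (Z : Finset γ) (Q : β → γ → Prop)
    (hε : 0 ≤ ε) :
    (#X : ℝ) * min (#{z ∈ Z | MostSatisfy ε X (Q · z)} : ℝ)
        (#Z - #{z ∈ Z | MostSatisfy ε X (Q · z)}) ≤
      4 * ε * #X * #Z + #{x ∈ X | ¬Polarized ε Z (Q x)} * #Z +
        #X * #{z ∈ Z | ¬Polarized ε X (Q · z)} := by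
  have ha : (#{x ∈ X | MostSatisfy ε Z (Q x)} : ℝ) ≤ #X := mod_cast card_filter_le _ _
  have hb : (#{z ∈ Z | MostSatisfy ε X (Q · z)} : ℝ) ≤ #Z := mod_cast card_filter_le _ _
  set a : ℝ := ↑(#{x ∈ X | MostSatisfy ε Z (Q x)})
  set c : ℝ := ↑(#{x ∈ X | FewSatisfy ε Z (Q x)})
  set b : ℝ := ↑(#{z ∈ Z | MostSatisfy ε X (Q · z)})
  set f : ℝ := ↑(#{z ∈ Z | FewSatisfy ε X (Q · z)})
  have haf : a * f ≤ 2 * ε * #X * #Z := card_mostSatisfy_mul_card_fewSatisfy_le_two_mul X Z Q hε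
  -- the same count for the complementary relation bounds the pairs (sparse row, dense column)
  have hcb : c * b ≤ 2 * ε * #X * #Z := by
    have := card_mostSatisfy_mul_card_fewSatisfy_le_two_mul X Z (fun x z => ¬Q x z) hε
    simp only [mostSatisfy_not_iff, fewSatisfy_not_iff] at this
    linarith
  have hX := card_le_card_few_add_most_add_not_polarized X ε Z Q
  have hZ := card_le_card_few_add_most_add_not_polarized Z ε X fun z x => Q x z
  have hc : 0 ≤ c := Nat.cast_nonneg _
  have hmin_b := min_le_left b (#Z - b)
  have hmin_b' := min_le_right b (#Z - b)
  have hmin0 : 0 ≤ min b (#Z - b) := le_min (Nat.cast_nonneg _) (by linarith)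
  nlinarith [mul_le_mul_of_nonneg_left hmin_b hc,
    mul_le_mul_of_nonneg_left hmin_b' (Nat.cast_nonneg _ : (0 : ℝ) ≤ a)]

end Slice

section Transfer

variable (P : Finset ι) (D : Finset β) (Q : ι → β → Prop) {ε : ℝ}

theorem sum_card_filter_le_mul_card_mostSatisfy_add (hε : 0 ≤ ε) :
    ∑ i ∈ P, (#{x ∈ D | Q i x} : ℝ) ≤
      #D * #{i ∈ P | MostSatisfy ε D (Q i)} + ε * #D * #P +
        #D * #{i ∈ P | ¬Polarized ε D (Q i)} := by
  have hD : (0 : ℝ) ≤ #D := Nat.cast_nonneg _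
  calc ∑ i ∈ P, (#{x ∈ D | Q i x} : ℝ)
      ≤ ∑ i ∈ P, (#D * (if MostSatisfy ε D (Q i) then 1 else 0) + ε * #D +
          #D * (if ¬Polarized ε D (Q i) then 1 else 0)) := by
        refine sum_le_sum fun i _ => ?_
        have hle : (#{x ∈ D | Q i x} : ℝ) ≤ #D := mod_cast card_filter_le _ _
        by_cases hmost : MostSatisfy ε D (Q i)
        · simp only [hmost, if_true]
          split_ifs <;> nlinarith
        by_cases hpol : Polarized ε D (Q i)
        · have hfew : (#{x ∈ D | Q i x} : ℝ) < ε * #D := hpol.resolve_right hmost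
          simp only [hmost, hpol, if_false, not_true]
          linarith
        · simp only [hmost, hpol, if_false, if_true, not_false_eq_true]
          nlinarith
    _ = #D * #{i ∈ P | MostSatisfy ε D (Q i)} + ε * #D * #P +
          #D * #{i ∈ P | ¬Polarized ε D (Q i)} := by
        simp only [sum_add_distrib, ← mul_sum, sum_boole, sum_const, nsmul_eq_mul]
        ring

theorem mul_card_mostSatisfy_le_sum_card_filter :
    (1 - ε) * #D * #{i ∈ P | MostSatisfy ε D (Q i)} ≤ ∑ i ∈ P, (#{x ∈ D | Q i x} : ℝ) :=
  calc (1 - ε) * #D * #{i ∈ P | MostSatisfy ε D (Q i)}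
      = ∑ i ∈ P with MostSatisfy ε D (Q i), (1 - ε) * (#D : ℝ) := by
        rw [sum_const, nsmul_eq_mul, mul_comm]
    _ ≤ ∑ i ∈ P with MostSatisfy ε D (Q i), (#{x ∈ D | Q i x} : ℝ) :=
        sum_le_sum fun i hi => (mem_filter.mp hi).2.le
    _ ≤ ∑ i ∈ P, (#{x ∈ D | Q i x} : ℝ) :=
        sum_le_sum_of_subset_of_nonneg (filter_subset _ _) fun _ _ _ => Nat.cast_nonneg _

end Transfer

section GraphSymmetry

variable (s : Finset β) (t : Finset γ) (R : β → γ → Prop) {θ η : ℝ}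

theorem sum_card_le_of_card_mostSatisfy_le (hθ : 0 ≤ θ)
    (hA : (#{y ∈ s | MostSatisfy θ t (R y)} : ℝ) ≤ 2 * θ * #s)
    (hM : (#{y ∈ s | ¬Polarized θ t (R y)} : ℝ) ≤ η * #s) :
    ∑ y ∈ s, (#{z ∈ t | R y z} : ℝ) ≤ (3 * θ + η) * (#s * #t) := by
  have ht : (0 : ℝ) ≤ #t := Nat.cast_nonneg _
  have := sum_card_filter_le_mul_card_mostSatisfy_add s t R hθ
  nlinarith [mul_le_mul_of_nonneg_left hA ht, mul_le_mul_of_nonneg_left hM ht]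

theorem card_fewSatisfy_le_of_lt_card_mostSatisfy (hθ : 0 ≤ θ)
    (hA : 2 * θ * #s < #{y ∈ s | MostSatisfy θ t (R y)}) :
    (#{z ∈ t | FewSatisfy θ s (R · z)} : ℝ) ≤ 2 * θ * #t := by
  have hpairs := card_mostSatisfy_mul_card_fewSatisfy_le s t R (ε := θ)
  have hApos : (0 : ℝ) < #{y ∈ s | MostSatisfy θ t (R y)} := by
    have : (0 : ℝ) ≤ 2 * θ * #s := by positivity
    linarith
  by_contra! hS
  nlinarith [mul_lt_mul_of_pos_left hS hApos,
    mul_le_mul_of_nonneg_left hA.le (Nat.cast_nonneg #{z ∈ t | FewSatisfy θ s (R · z)} : (0:ℝ) ≤ _)]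

/-- The Symmetry Lemma for graphs. -/
theorem sum_card_filter_le_or_le (hθ : 0 ≤ θ) (hθη : 4 * θ + η < 1) (ht : 0 < #t)
    (hs_mid : (#{y ∈ s | ¬Polarized θ t (R y)} : ℝ) ≤ η * #s)
    (ht_mid : (#{z ∈ t | ¬Polarized θ s (R · z)} : ℝ) ≤ η * #t) :
    ∑ y ∈ s, (#{z ∈ t | R y z} : ℝ) ≤ (3 * θ + η) * (#s * #t) ∨
      (1 - (3 * θ + η)) * (#s * #t) ≤ ∑ y ∈ s, (#{z ∈ t | R y z} : ℝ) := by
  by_cases hA : (#{y ∈ s | MostSatisfy θ t (R y)} : ℝ) ≤ 2 * θ * #s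
  · exact Or.inl (sum_card_le_of_card_mostSatisfy_le s t R hθ hA hs_mid)
  -- the complementary relation has the roles of dense and sparse rows swapped
  have hcompl := sum_card_le_of_card_mostSatisfy_le s t (fun y z => ¬R y z) (η := η) hθ
  have hmost_compl := card_fewSatisfy_le_of_lt_card_mostSatisfy s t (fun y z => ¬R y z) hθ
  simp only [mostSatisfy_not_iff, fewSatisfy_not_iff, polarized_not_iff] at hcompl hmost_compl
  by_cases hC : (#{y ∈ s | FewSatisfy θ t (R y)} : ℝ) ≤ 2 * θ * #s
  · right
    have := hcompl hC hs_mid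
    simp only [cast_card_filter_not, sum_sub_distrib, sum_const, nsmul_eq_mul] at this
    linarith
  · have hfew := card_fewSatisfy_le_of_lt_card_mostSatisfy s t R hθ (not_le.mp hA)
    have hmost := hmost_compl (not_le.mp hC)
    have hcover := card_le_card_few_add_most_add_not_polarized t θ s fun z y => R y z
    have ht' : (0 : ℝ) < #t := mod_cast ht
    nlinarith

end GraphSymmetry

section Hypergraph

variable {α₁ α₂ α₃ : Type*} {ε θ : ℝ}

theorem mul_card_not_polarized_le_sum_min (s : Finset β) (t : Finset γ) (R : β → γ → Prop) :
    θ * #t * #{y ∈ s | ¬Polarized θ t (R y)} ≤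
      ∑ y ∈ s, min (#{z ∈ t | R y z} : ℝ) (#t - #{z ∈ t | R y z}) :=
  calc θ * #t * #{y ∈ s | ¬Polarized θ t (R y)}
      = ∑ y ∈ s with ¬Polarized θ t (R y), θ * (#t : ℝ) := by
        rw [sum_const, nsmul_eq_mul, mul_comm]
    _ ≤ ∑ y ∈ s with ¬Polarized θ t (R y), min (#{z ∈ t | R y z} : ℝ) (#t - #{z ∈ t | R y z}) :=
        sum_le_sum fun y hy => not_polarized_iff.mp (mem_filter.mp hy).2
    _ ≤ ∑ y ∈ s, min (#{z ∈ t | R y z} : ℝ) (#t - #{z ∈ t | R y z}) := by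
        refine sum_le_sum_of_subset_of_nonneg (filter_subset _ _) fun y _ _ => ?_
        have : (#{z ∈ t | R y z} : ℝ) ≤ #t := mod_cast card_filter_le _ _
        exact le_min (Nat.cast_nonneg _) (by linarith)

theorem card_not_polarized_mostSatisfy_le (X : Finset α₁) (Y : Finset α₂) (Z : Finset α₃)
    (E : α₁ → α₂ → α₃ → Prop) (hθ : 0 < θ) (hθε : θ ^ 2 = ε) (hX : 0 < #X) (hZ : 0 < #Z)
    (hXY : ∑ y ∈ Y, (#{x ∈ X | ¬Polarized ε Z (E x y)} : ℝ) ≤ ε * (#X * #Y))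
    (hYZ : ∑ y ∈ Y, (#{z ∈ Z | ¬Polarized ε X (E · y z)} : ℝ) ≤ ε * (#Y * #Z)) :
    (#{y ∈ Y | ¬Polarized θ Z fun z => MostSatisfy ε X (E · y z)} : ℝ) ≤ 6 * θ * #Y := by
  have hε : 0 ≤ ε := hθε ▸ sq_nonneg θ
  have hsum : (#X : ℝ) * ∑ y ∈ Y, min (#{z ∈ Z | MostSatisfy ε X (E · y z)} : ℝ)
      (#Z - #{z ∈ Z | MostSatisfy ε X (E · y z)}) ≤ 6 * ε * #X * #Y * #Z := by
    rw [mul_sum]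
    calc _ ≤ ∑ y ∈ Y, (4 * ε * #X * #Z + #{x ∈ X | ¬Polarized ε Z (E x y)} * #Z +
          #X * #{z ∈ Z | ¬Polarized ε X (E · y z)}) :=
          sum_le_sum fun y _ => card_mul_min_card_mostSatisfy_le X Z (E · y ·) hε
      _ = 4 * ε * #X * #Z * #Y + (∑ y ∈ Y, (#{x ∈ X | ¬Polarized ε Z (E x y)} : ℝ)) * #Z +
          #X * ∑ y ∈ Y, (#{z ∈ Z | ¬Polarized ε X (E · y z)} : ℝ) := by
          rw [sum_add_distrib, sum_add_distrib, sum_const, nsmul_eq_mul, sum_mul, mul_sum]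
          ring
      _ ≤ 6 * ε * #X * #Y * #Z := by
          have := mul_le_mul_of_nonneg_right hXY (Nat.cast_nonneg #Z : (0 : ℝ) ≤ #Z)
          have := mul_le_mul_of_nonneg_left hYZ (Nat.cast_nonneg #X : (0 : ℝ) ≤ #X)
          nlinarith
  have hmarkov := mul_card_not_polarized_le_sum_min Y Z (fun y z => MostSatisfy ε X (E · y z))
    (θ := θ)
  subst hθε
  refine le_of_mul_le_mul_left ?_ (by positivity : (0 : ℝ) < θ * #X * #Z)
  nlinarith [mul_le_mul_of_nonneg_left hmarkov (Nat.cast_nonneg #X : (0 : ℝ) ≤ #X)]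

theorem card_not_polarized_le_of_almost_good (s : Finset β) (t : Finset γ) (D : Finset α₁)
    (Q : β × γ → α₁ → Prop) (hD : 0 < #D)
    (h : (1 - ε) * ((#s : ℝ) * #t) ≤ #{p ∈ s ×ˢ t |
      (#{x ∈ D | Q p x} : ℝ) / #D < ε ∨ 1 - ε < (#{x ∈ D | Q p x} : ℝ) / #D}) :
    (#{p ∈ s ×ˢ t | ¬Polarized ε D (Q p)} : ℝ) ≤ ε * (#s * #t) := by
  have hD' : (0 : ℝ) < #D := mod_cast hD
  rw [filter_congr fun p _ => (show _ ↔ Polarized ε D (Q p) by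
    rw [div_lt_iff₀ hD', lt_div_iff₀ hD']; rfl)] at h
  have := cast_card_filter_not (s ×ˢ t) fun p => Polarized ε D (Q p)
  rw [card_product, Nat.cast_mul] at this
  linarith

theorem card_filter_triple_le_or_le (X : Finset α₁) (Y : Finset α₂) (Z : Finset α₃)
    (E : α₁ → α₂ → α₃ → Prop) (hθ : 0 < θ) (hθε : θ ^ 2 = ε) (hθ₁ : 10 * θ < 1)
    (hX : 0 < #X) (hY : 0 < #Y) (hZ : 0 < #Z)
    (h₁ : (#{p ∈ Y ×ˢ Z | ¬Polarized ε X (E · p.1 p.2)} : ℝ) ≤ ε * (#Y * #Z))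
    (h₂ : (#{p ∈ X ×ˢ Z | ¬Polarized ε Y (E p.1 · p.2)} : ℝ) ≤ ε * (#X * #Z))
    (h₃ : (#{p ∈ X ×ˢ Y | ¬Polarized ε Z (E p.1 p.2 ·)} : ℝ) ≤ ε * (#X * #Y)) :
    (#{p ∈ X ×ˢ Y ×ˢ Z | E p.1 p.2.1 p.2.2} : ℝ) ≤ (9 * θ + 2 * ε) * (#X * #Y * #Z) ∨
      (1 - (9 * θ + 2 * ε)) * (#X * #Y * #Z) ≤ #{p ∈ X ×ˢ Y ×ˢ Z | E p.1 p.2.1 p.2.2} := by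
  have hε : 0 ≤ ε := hθε ▸ sq_nonneg θ
  have hY_mid := card_not_polarized_mostSatisfy_le X Y Z E hθ hθε hX hZ
    (by rw [← Nat.cast_sum, ← card_filter_product_eq_sum_snd]; exact h₃)
    (by rw [← Nat.cast_sum, ← card_filter_product_eq_sum_fst]; exact h₁)
  have hZ_mid := card_not_polarized_mostSatisfy_le X Z Y (fun x z y => E x y z) hθ hθε hX hY
    (by rw [← Nat.cast_sum, ← card_filter_product_eq_sum_snd]; exact h₂)
    (by rw [← Nat.cast_sum, ← card_filter_product_eq_sum_snd, mul_comm (#Z : ℝ)]; exact h₁)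
  have hT := card_filter_product_eq_sum_snd X (Y ×ˢ Z) fun x q => E x q.1 q.2
  have hupper := sum_card_filter_le_mul_card_mostSatisfy_add (Y ×ˢ Z) X (fun q x => E x q.1 q.2) hε
  have hlower :=
    mul_card_mostSatisfy_le_sum_card_filter (Y ×ˢ Z) X (fun q x => E x q.1 q.2) (ε := ε)
  have hdense := card_filter_product_eq_sum_fst Y Z fun y z => MostSatisfy ε X (E · y z)
  rw [card_product, Nat.cast_mul] at hupper
  rw [← Nat.cast_sum, ← hT, hdense, Nat.cast_sum] at hupper hlower
  have hX₀ : (0 : ℝ) ≤ #X := Nat.cast_nonneg _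
  have hXYZ : (0 : ℝ) ≤ #X * #Y * #Z := by positivity
  rcases sum_card_filter_le_or_le Y Z (fun y z => MostSatisfy ε X (E · y z)) hθ.le (by linarith)
    hZ hY_mid hZ_mid with hR | hR
  · left
    nlinarith [mul_le_mul_of_nonneg_left hR hX₀, mul_le_mul_of_nonneg_left h₁ hX₀]
  · right
    have hε₁ : 0 ≤ (1 - ε) * #X := mul_nonneg (by nlinarith) hX₀
    nlinarith [mul_le_mul_of_nonneg_left hR hε₁, mul_nonneg (mul_nonneg hε hθ.le) hXYZ,
      mul_nonneg hε hXYZ]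

end Hypergraph

theorem nine_mul_sqrt_add_two_mul_lt {ε : ℝ} (hε0 : 0 < ε) (hε1 : ε < 1 / 100) :
    9 * √ε + 2 * ε < 4 * ε ^ ((1 : ℝ) / 16) := by
  set q := ε ^ ((1 : ℝ) / 4)
  have hq0 : 0 < q := by positivity
  have hq4 : q ^ 4 = ε := by
    rw [← Real.rpow_natCast, ← Real.rpow_mul hε0.le]
    norm_num
  have hsqrt : √ε = q ^ 2 := by
    rw [← hq4, show q ^ 4 = (q ^ 2) ^ 2 by ring, Real.sqrt_sq (by positivity)]
  have hq : q < 1 / 3 := by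
    by_contra! h
    nlinarith [pow_le_pow_left₀ (by norm_num) h 4]
  have hq16 : q ≤ ε ^ ((1 : ℝ) / 16) :=
    Real.rpow_le_rpow_of_exponent_ge hε0 (by linarith) (by norm_num)
  calc 9 * √ε + 2 * ε = q * (9 * q + 2 * q ^ 3) := by rw [hsqrt, ← hq4]; ring
    _ < q * 4 := mul_lt_mul_of_pos_left (by nlinarith) hq0
    _ ≤ 4 * ε ^ ((1 : ℝ) / 16) := by linarith

end

theorem stmt_4_general {α : Type*} (ε : ℝ) (hε0 : 0 < ε) (hε1 : ε < 1/100)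
    (V1 V2 V3 : Finset α)
    (E : α → α → α → Prop)
    -- `V₁` is almost `ε`-good with respect to `H`
    (good1 : (1 - ε) * ((V2.card : ℝ) * (V3.card : ℝ)) ≤
      (((V2 ×ˢ V3).filter fun p =>
        ((V1.filter fun x => E x p.1 p.2).card : ℝ) / (V1.card : ℝ) < ε ∨
        1 - ε < ((V1.filter fun x => E x p.1 p.2).card : ℝ) / (V1.card : ℝ)).card : ℝ))
    -- `V₂` is almost `ε`-good with respect to `H`
    (good2 : (1 - ε) * ((V1.card : ℝ) * (V3.card : ℝ)) ≤
      (((V1 ×ˢ V3).filter fun p =>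
        ((V2.filter fun y => E p.1 y p.2).card : ℝ) / (V2.card : ℝ) < ε ∨
        1 - ε < ((V2.filter fun y => E p.1 y p.2).card : ℝ) / (V2.card : ℝ)).card : ℝ))
    -- `V₃` is almost `ε`-good with respect to `H`
    (good3 : (1 - ε) * ((V1.card : ℝ) * (V2.card : ℝ)) ≤
      (((V1 ×ˢ V2).filter fun p =>
        ((V3.filter fun z => E p.1 p.2 z).card : ℝ) / (V3.card : ℝ) < ε ∨
        1 - ε < ((V3.filter fun z => E p.1 p.2 z).card : ℝ) / (V3.card : ℝ)).card : ℝ)) :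
    (((V1 ×ˢ V2 ×ˢ V3).filter fun p => E p.1 p.2.1 p.2.2).card : ℝ) /
        ((V1.card : ℝ) * (V2.card : ℝ) * (V3.card : ℝ)) < 4 * ε ^ ((1:ℝ)/16) ∨
      1 - 4 * ε ^ ((1:ℝ)/16) <
        (((V1 ×ˢ V2 ×ˢ V3).filter fun p => E p.1 p.2.1 p.2.2).card : ℝ) /
          ((V1.card : ℝ) * (V2.card : ℝ) * (V3.card : ℝ)) := by
  have hbound := nine_mul_sqrt_add_two_mul_lt hε0 hε1
  rcases eq_or_ne ((#V1 : ℝ) * #V2 * #V3) 0 with h0 | h0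
  · left
    rw [h0, div_zero]
    positivity
  have hpos : (0 : ℝ) < #V1 * #V2 * #V3 := lt_of_le_of_ne (by positivity) h0.symm
  simp only [ne_eq, mul_eq_zero, Nat.cast_eq_zero, not_or, ← pos_iff_ne_zero] at h0
  obtain ⟨⟨h1, h2⟩, h3⟩ := h0
  have hθ : 0 < √ε := Real.sqrt_pos.mpr hε0
  have hθ₁ : 10 * √ε < 1 := by nlinarith [Real.sq_sqrt hε0.le]
  rcases card_filter_triple_le_or_le V1 V2 V3 E hθ (Real.sq_sqrt hε0.le) hθ₁ h1 h2 h3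
    (card_not_polarized_le_of_almost_good V2 V3 V1 (fun p x => E x p.1 p.2) h1 good1)
    (card_not_polarized_le_of_almost_good V1 V3 V2 (fun p y => E p.1 y p.2) h2 good2)
    (card_not_polarized_le_of_almost_good V1 V2 V3 (fun p z => E p.1 p.2 z) h3 good3) with h | h
  · left
    rw [div_lt_iff₀ hpos]
    nlinarith
  · right
    rw [lt_div_iff₀ hpos]
    nlinarith

/-- Lemma 2.5, Symmetry Lemma for 3-graphs: if `0 < ε < 1/100`
and `H = (V₁ ∪ V₂ ∪ V₃, E)` is a tripartite 3-graph in which each `Vᵢ` is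
almost `ε`-good, then `d_H(V₁,V₂,V₃) ∈ [0, 4ε^(1/16)) ∪ (1-4ε^(1/16), 1]`. -/
theorem stmt_4 {α : Type*} [DecidableEq α] (ε : ℝ) (hε0 : 0 < ε) (hε1 : ε < 1/100)
    (V1 V2 V3 : Finset α)
    (h12 : Disjoint V1 V2) (h13 : Disjoint V1 V3) (h23 : Disjoint V2 V3)
    (E : α → α → α → Prop)
    -- `V₁` is almost `ε`-good with respect to `H`
    (good1 : (1 - ε) * ((V2.card : ℝ) * (V3.card : ℝ)) ≤
      (((V2 ×ˢ V3).filter fun p =>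
        ((V1.filter fun x => E x p.1 p.2).card : ℝ) / (V1.card : ℝ) < ε ∨
        1 - ε < ((V1.filter fun x => E x p.1 p.2).card : ℝ) / (V1.card : ℝ)).card : ℝ))
    -- `V₂` is almost `ε`-good with respect to `H`
    (good2 : (1 - ε) * ((V1.card : ℝ) * (V3.card : ℝ)) ≤
      (((V1 ×ˢ V3).filter fun p =>
        ((V2.filter fun y => E p.1 y p.2).card : ℝ) / (V2.card : ℝ) < ε ∨
        1 - ε < ((V2.filter fun y => E p.1 y p.2).card : ℝ) / (V2.card : ℝ)).card : ℝ))
    -- `V₃` is almost `ε`-good with respect to `H`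
    (good3 : (1 - ε) * ((V1.card : ℝ) * (V2.card : ℝ)) ≤
      (((V1 ×ˢ V2).filter fun p =>
        ((V3.filter fun z => E p.1 p.2 z).card : ℝ) / (V3.card : ℝ) < ε ∨
        1 - ε < ((V3.filter fun z => E p.1 p.2 z).card : ℝ) / (V3.card : ℝ)).card : ℝ)) :
    (((V1 ×ˢ V2 ×ˢ V3).filter fun p => E p.1 p.2.1 p.2.2).card : ℝ) /
        ((V1.card : ℝ) * (V2.card : ℝ) * (V3.card : ℝ)) < 4 * ε ^ ((1:ℝ)/16) ∨
      1 - 4 * ε ^ ((1:ℝ)/16) <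
        (((V1 ×ˢ V2 ×ˢ V3).filter fun p => E p.1 p.2.1 p.2.2).card : ℝ) /
          ((V1.card : ℝ) * (V2.card : ℝ) * (V3.card : ℝ)) :=
  stmt_4_general ε hε0 hε1 V1 V2 V3 E good1 good2 good3
end

section
/- Let $H = (V_1 \cup V_2 \cup V_3, E)$ be a tripartite $3$-uniform hypergraph, and let $\mathcal{P}$ be a partition of $V_1$ which is almost $\epsilon$-good with respect to $H$. If $\mathcal{Q}$ is a partition of $V_1$ refining $\mathcal{P}$, then $\mathcal{Q}$ is almost $\epsilon^{1/4}$-good with respect to $H$ (in particular, almost $\sqrt{\epsilon}$-good). -/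
/-
Write `δ = ε ^ (1/4)`. If `δ > 1/2` every set is `δ`-good, because every density lies in
`[0, δ) ∪ (1 - δ, 1]`. Otherwise, the parts of `𝒬` inside parts of `𝒫` that are not `ε`-good cover
at most `ε |V₁|`. Inside an `ε`-good part `X`, take a pair `yz` at which `X` is `ε`-homogeneous, say
with at most `ε |X|` neighbours: a subpart of density in `[δ, 1 - δ]` has at least a `δ`-fraction of
its points among these neighbours, so such subparts cover at most `(ε/δ) |X|`. A subpart that is not
`δ`-good has density in `[δ, 1 - δ]` at more than `δ |V₂||V₃|` pairs, while `X` is inhomogeneous at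
no more than `ε |V₂||V₃|` pairs; double counting shows that the subparts of `X` that are not `δ`-good
cover at most `(ε/δ² + ε/δ) |X|`. In total the parts of `𝒬` that are not `δ`-good cover at most
`(δ⁴ + δ³ + δ²) |V₁| ≤ δ |V₁|`.
-/

open scoped Classical
open Finset

/-- `X ⊆ V₁` is almost `δ`-good with respect to the tripartite 3-graph with
parts `V₁,V₂,V₃` and edge predicate `E`: for at least `(1-δ)|V₂||V₃|` pairs
`(y,z) ∈ V₂ × V₃` one has `|N_H(yz) ∩ X|/|X| ∈ [0,δ) ∪ (1-δ,1]`. -/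
def AlmostGood {α : Type*} [DecidableEq α] (E : α → α → α → Prop)
    (V2 V3 : Finset α) (δ : ℝ) (X : Finset α) : Prop :=
  (1 - δ) * ((V2.card : ℝ) * (V3.card : ℝ)) ≤
    (((V2 ×ˢ V3).filter fun p =>
      ((X.filter fun x => E x p.1 p.2).card : ℝ) / (X.card : ℝ) < δ ∨
      1 - δ < ((X.filter fun x => E x p.1 p.2).card : ℝ) / (X.card : ℝ)).card : ℝ)

theorem Finset.sum_card_le_card_of_pairwiseDisjoint {α ι : Type*} [DecidableEq α] {s : Finset ι}
    {f : ι → Finset α} {W : Finset α} (hs : (s : Set ι).PairwiseDisjoint f)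
    (hsub : ∀ i ∈ s, f i ⊆ W) : ∑ i ∈ s, #(f i) ≤ #W :=
  card_biUnion hs ▸ card_le_card (biUnion_subset.2 hsub)

theorem Finset.cast_card_biUnion_id {α : Type*} [DecidableEq α] {s : Finset (Finset α)}
    (hs : (s : Set (Finset α)).PairwiseDisjoint id) :
    (#(s.biUnion id) : ℝ) = ∑ X ∈ s, (#X : ℝ) := by
  rw [card_biUnion hs, Nat.cast_sum]
  rfl

theorem Finset.sum_le_sum_of_forall_exists_rel {ι κ : Type*} {s : Finset ι} {t : Finset κ}
    (r : ι → κ → Prop) (hr : ∀ i ∈ s, ∃ j ∈ t, r i j) (f : ι → ℝ) (w : κ → ℝ)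
    (hw : ∀ j ∈ t, ∀ u ⊆ s, (∀ i ∈ u, r i j) → ∑ i ∈ u, f i ≤ w j) :
    ∑ i ∈ s, f i ≤ ∑ j ∈ t, w j := by
  rcases isEmpty_or_nonempty κ with hκ | hκ
  · rcases s.eq_empty_or_nonempty with rfl | ⟨i, hi⟩
    · simp [t.eq_empty_of_isEmpty]
    · exact isEmptyElim (hr i hi).choose
  choose! g hgt hgr using hr
  rw [← sum_fiberwise_of_maps_to hgt]
  refine sum_le_sum fun j hj => hw j hj _ (filter_subset _ _) fun i hi => ?_
  obtain ⟨his, hij⟩ := mem_filter.1 hi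
  exact hij ▸ hgr i his

section Homogeneous

variable {α β : Type*}

def IsHomogeneous (q : α → Prop) (δ : ℝ) (X : Finset α) : Prop :=
  (#(X.filter q) : ℝ) / #X < δ ∨ 1 - δ < (#(X.filter q) : ℝ) / #X

variable {q : α → Prop} {ε δ : ℝ} {X : Finset α}

theorem isHomogeneous_of_half_lt (h : 1 / 2 < δ) : IsHomogeneous q δ X := by
  by_contra! h'
  rw [IsHomogeneous, not_or, not_lt, not_lt] at h'
  linarith [h'.1, h'.2]

theorem cast_card_filter_add_cast_card_filter_not (X : Finset α) (q : α → Prop) :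
    (#(X.filter q) : ℝ) + #(X.filter (¬q ·)) = #X := by
  exact_mod_cast card_filter_add_card_filter_not q

theorem IsHomogeneous.card_filter_le (h : IsHomogeneous q ε X) :
    (#(X.filter q) : ℝ) ≤ ε * #X ∨ (#(X.filter (¬q ·)) : ℝ) ≤ ε * #X := by
  rcases X.eq_empty_or_nonempty with rfl | hX
  · simp
  have hX : (0 : ℝ) < #X := by exact_mod_cast hX.card_pos
  have hsum := cast_card_filter_add_cast_card_filter_not X q
  rcases h with h | h
  · rw [div_lt_iff₀ hX] at h
    exact Or.inl (by linarith)
  · rw [lt_div_iff₀ hX] at h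
    exact Or.inr (by linarith)

theorem le_card_filter_of_not_isHomogeneous (h : ¬IsHomogeneous q δ X) :
    δ * #X ≤ (#(X.filter q) : ℝ) ∧ δ * #X ≤ (#(X.filter (¬q ·)) : ℝ) := by
  rcases X.eq_empty_or_nonempty with rfl | hX
  · simp
  have hX : (0 : ℝ) < #X := by exact_mod_cast hX.card_pos
  have hsum := cast_card_filter_add_cast_card_filter_not X q
  rw [IsHomogeneous, not_or, not_lt, not_lt, le_div_iff₀ hX, div_le_iff₀ hX] at h
  constructor <;> linarith [h.1, h.2]

theorem mul_sum_card_le_of_card_filter_le {r : α → Prop} [DecidablePred r] {S : Finset (Finset α)}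
    (hX : (#(X.filter r) : ℝ) ≤ ε * #X) (hS : (S : Set (Finset α)).PairwiseDisjoint id)
    (hSX : ∀ Y ∈ S, Y ⊆ X) (hSr : ∀ Y ∈ S, δ * #Y ≤ (#(Y.filter r) : ℝ)) :
    δ * ∑ Y ∈ S, (#Y : ℝ) ≤ ε * #X :=
  calc δ * ∑ Y ∈ S, (#Y : ℝ) ≤ ∑ Y ∈ S, (#(Y.filter r) : ℝ) := by
        rw [mul_sum]; exact sum_le_sum hSr
    _ ≤ #(X.filter r) := by
        have hdisj : (S : Set (Finset α)).PairwiseDisjoint (·.filter r) :=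
          hS.mono_on fun Y _ => filter_subset r Y
        exact_mod_cast sum_card_le_card_of_pairwiseDisjoint hdisj
          fun Y hY => filter_subset_filter r (hSX Y hY)
    _ ≤ ε * #X := hX

theorem IsHomogeneous.mul_sum_card_not_isHomogeneous_le {S : Finset (Finset α)}
    (hX : IsHomogeneous q ε X) (hS : (S : Set (Finset α)).PairwiseDisjoint id)
    (hSX : ∀ Y ∈ S, Y ⊆ X) :
    δ * ∑ Y ∈ S with ¬IsHomogeneous q δ Y, (#Y : ℝ) ≤ ε * #X := by
  have hS' := hS.subset (coe_subset.2 (filter_subset (fun Y => ¬IsHomogeneous q δ Y) S))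
  have hSX' : ∀ Y ∈ S.filter fun Y => ¬IsHomogeneous q δ Y, Y ⊆ X :=
    fun Y hY => hSX Y (mem_filter.1 hY).1
  rcases hX.card_filter_le with hX | hX
  · exact mul_sum_card_le_of_card_filter_le (r := q) hX hS' hSX' fun Y hY =>
      (le_card_filter_of_not_isHomogeneous (mem_filter.1 hY).2).1
  · exact mul_sum_card_le_of_card_filter_le (r := (¬q ·)) hX hS' hSX' fun Y hY =>
      (le_card_filter_of_not_isHomogeneous (mem_filter.1 hY).2).2

theorem mul_sum_card_not_isHomogeneous_le {S : Finset (Finset α)} (hδ : 0 ≤ δ)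
    (hS : (S : Set (Finset α)).PairwiseDisjoint id) (hSX : ∀ Y ∈ S, Y ⊆ X) :
    δ * ∑ Y ∈ S with ¬IsHomogeneous q δ Y, (#Y : ℝ) ≤
      if IsHomogeneous q ε X then ε * #X else δ * #X := by
  split_ifs with hX
  · exact hX.mul_sum_card_not_isHomogeneous_le hS hSX
  · refine mul_le_mul_of_nonneg_left ?_ hδ
    exact_mod_cast sum_card_le_card_of_pairwiseDisjoint
      (hS.subset (coe_subset.2 (filter_subset _ S))) fun Y hY => hSX Y (mem_filter.1 hY).1

/- `N p` plays the role of the link `N_H(yz)` of a pair `p = (y, z)` ranging over `R = V₂ × V₃`. -/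
theorem sq_mul_sum_card_le_of_card_not_isHomogeneous_le {R : Finset β} {N : β → α → Prop}
    {S : Finset (Finset α)} (hε : 0 ≤ ε) (hδ : 0 < δ)
    (hX : (#(R.filter fun p => ¬IsHomogeneous (N p) ε X) : ℝ) ≤ ε * #R)
    (hS : (S : Set (Finset α)).PairwiseDisjoint id) (hSX : ∀ Y ∈ S, Y ⊆ X)
    (hSbad : ∀ Y ∈ S, δ * #R < #(R.filter fun p => ¬IsHomogeneous (N p) δ Y)) :
    δ ^ 2 * ∑ Y ∈ S, (#Y : ℝ) ≤ ε * (1 + δ) * #X := by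
  rcases S.eq_empty_or_nonempty with rfl | ⟨Y₀, hY₀⟩
  · simp only [sum_empty, mul_zero]
    positivity
  have hR : (0 : ℝ) < #R := ((mul_nonneg hδ.le (Nat.cast_nonneg _)).trans_lt (hSbad Y₀ hY₀)).trans_le
    (by exact_mod_cast card_filter_le _ _)
  set bad : Finset α → β → Prop := fun Y p => ¬IsHomogeneous (N p) δ Y
  have hcount : ∑ Y ∈ S, (#Y : ℝ) * #(R.filter (bad Y)) =
      ∑ p ∈ R, ∑ Y ∈ S with bad Y p, (#Y : ℝ) :=
    calc ∑ Y ∈ S, (#Y : ℝ) * #(R.filter (bad Y))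
        = ∑ Y ∈ S, ∑ p ∈ R.bipartiteAbove bad Y, (#Y : ℝ) := by
          simp only [bipartiteAbove, sum_const, nsmul_eq_mul, mul_comm]
      _ = _ := sum_sum_bipartiteAbove_eq_sum_sum_bipartiteBelow _ _
  have hhom : (#(R.filter fun p => IsHomogeneous (N p) ε X) : ℝ) ≤ #R := by
    exact_mod_cast card_filter_le _ _
  suffices δ ^ 2 * ∑ Y ∈ S, (#Y : ℝ) * #R ≤ ε * (1 + δ) * #X * #R from
    le_of_mul_le_mul_right (by simpa only [mul_assoc, sum_mul] using this) hR
  calc δ ^ 2 * ∑ Y ∈ S, (#Y : ℝ) * #R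
      ≤ δ * ∑ Y ∈ S, (#Y : ℝ) * #(R.filter (bad Y)) := by
        rw [pow_two, mul_assoc, mul_sum]
        refine mul_le_mul_of_nonneg_left (sum_le_sum fun Y hY => ?_) hδ.le
        nlinarith [hSbad Y hY, (Nat.cast_nonneg #Y : (0 : ℝ) ≤ #Y)]
    _ ≤ ∑ p ∈ R, if IsHomogeneous (N p) ε X then ε * #X else δ * #X := by
        rw [hcount, mul_sum]
        exact sum_le_sum fun p _ => mul_sum_card_not_isHomogeneous_le hδ.le hS hSX
    _ = ε * #X * #(R.filter fun p => IsHomogeneous (N p) ε X) +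
          δ * #X * #(R.filter fun p => ¬IsHomogeneous (N p) ε X) := by
        rw [sum_ite, sum_const, sum_const, nsmul_eq_mul, nsmul_eq_mul, mul_comm, add_comm]
        ring
    _ ≤ ε * (1 + δ) * #X * #R := by
        have := mul_le_mul_of_nonneg_left hX (mul_nonneg hδ.le (Nat.cast_nonneg #X))
        have := mul_le_mul_of_nonneg_left hhom (mul_nonneg hε (Nat.cast_nonneg #X))
        nlinarith

end Homogeneous

theorem almostGood_iff_card_not_isHomogeneous_le {α : Type*} [DecidableEq α]
    {E : α → α → α → Prop} {V2 V3 : Finset α} {δ : ℝ} {X : Finset α} :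
    AlmostGood E V2 V3 δ X ↔
      (#((V2 ×ˢ V3).filter fun p => ¬IsHomogeneous (fun x => E x p.1 p.2) δ X) : ℝ) ≤
        δ * #(V2 ×ˢ V3) := by
  have hsplit : (#((V2 ×ˢ V3).filter fun p => IsHomogeneous (fun x => E x p.1 p.2) δ X) : ℝ) +
      #((V2 ×ˢ V3).filter fun p => ¬IsHomogeneous (fun x => E x p.1 p.2) δ X) = #(V2 ×ˢ V3) := by
    exact_mod_cast card_filter_add_card_filter_not _
  have hgood : AlmostGood E V2 V3 δ X ↔ (1 - δ) * #(V2 ×ˢ V3) ≤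
      (#((V2 ×ˢ V3).filter fun p => IsHomogeneous (fun x => E x p.1 p.2) δ X) : ℝ) := by
    rw [AlmostGood, card_product, Nat.cast_mul]
    -- the two filters differ only in their `Decidable` instances
    convert Iff.rfl
    exact Iff.rfl
  rw [hgood]
  constructor <;> intro h <;> linarith

section AlmostGood

variable {α : Type*} [DecidableEq α] {E : α → α → α → Prop} {V2 V3 : Finset α} {ε δ : ℝ}

theorem almostGood_of_half_lt {X : Finset α} (h : 1 / 2 < δ) : AlmostGood E V2 V3 δ X := by
  rw [almostGood_iff_card_not_isHomogeneous_le,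
    filter_false_of_mem fun p _ => not_not.2 (isHomogeneous_of_half_lt h), card_empty,
    Nat.cast_zero]
  exact mul_nonneg (by linarith) (Nat.cast_nonneg _)

theorem sum_card_not_almostGood_le_of_refines {V1 : Finset α} {P Q : Finset (Finset α)}
    (hε : 0 ≤ ε) (hδ : 0 < δ) (hPdisj : (P : Set (Finset α)).PairwiseDisjoint id)
    (hPcover : P.biUnion id = V1) (hQdisj : (Q : Set (Finset α)).PairwiseDisjoint id)
    (hrefine : ∀ Y ∈ Q, ∃ X ∈ P, Y ⊆ X)
    (hgood : (1 - ε) * #V1 ≤ (#((P.filter (AlmostGood E V2 V3 ε)).biUnion id) : ℝ)) :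
    ∑ Y ∈ Q with ¬AlmostGood E V2 V3 δ Y, (#Y : ℝ) ≤ (ε * (1 + δ) / δ ^ 2 + ε) * #V1 := by
  set c := ε * (1 + δ) / δ ^ 2
  have hc : 0 ≤ c := by positivity
  calc ∑ Y ∈ Q with ¬AlmostGood E V2 V3 δ Y, (#Y : ℝ)
      ≤ ∑ X ∈ P, if AlmostGood E V2 V3 ε X then c * #X else (#X : ℝ) := by
        refine sum_le_sum_of_forall_exists_rel (· ⊆ ·) (fun Y hY => hrefine Y (mem_filter.1 hY).1)
          _ _ fun X _ S hSB hSX => ?_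
        have hS := hQdisj.subset (coe_subset.2 (hSB.trans (filter_subset _ _)))
        split_ifs with hX
        · have := sq_mul_sum_card_le_of_card_not_isHomogeneous_le hε hδ
            (almostGood_iff_card_not_isHomogeneous_le.1 hX) hS hSX fun Y hY =>
              not_le.1 (almostGood_iff_card_not_isHomogeneous_le.not.1 (mem_filter.1 (hSB hY)).2)
          rw [div_mul_eq_mul_div, le_div_iff₀ (by positivity)]
          linarith
        · exact_mod_cast sum_card_le_card_of_pairwiseDisjoint hS hSX
    _ = c * ∑ X ∈ P with AlmostGood E V2 V3 ε X, (#X : ℝ) +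
          ∑ X ∈ P with ¬AlmostGood E V2 V3 ε X, (#X : ℝ) := by
        rw [sum_ite, mul_sum]
    _ ≤ (c + ε) * #V1 := by
        have htotal : ∑ X ∈ P with AlmostGood E V2 V3 ε X, (#X : ℝ) +
            ∑ X ∈ P with ¬AlmostGood E V2 V3 ε X, (#X : ℝ) = #V1 := by
          rw [sum_filter_add_sum_filter_not, ← cast_card_biUnion_id hPdisj, hPcover]
        rw [cast_card_biUnion_id (hPdisj.subset (coe_subset.2 (filter_subset _ _)))] at hgood
        have hbad : 0 ≤ ∑ X ∈ P with ¬AlmostGood E V2 V3 ε X, (#X : ℝ) :=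
          sum_nonneg fun _ _ => Nat.cast_nonneg _
        nlinarith [mul_le_mul_of_nonneg_left
          (show ∑ X ∈ P with AlmostGood E V2 V3 ε X, (#X : ℝ) ≤ #V1 by linarith) hc]

end AlmostGood

theorem stmt_5_general {α : Type*} [DecidableEq α] (ε : ℝ) (hε0 : 0 < ε)
    (V1 V2 V3 : Finset α)
    (E : α → α → α → Prop)
    (P Q : Finset (Finset α))
    (hPdisj : (P : Set (Finset α)).PairwiseDisjoint id)
    (hPcover : P.biUnion id = V1)
    (hQdisj : (Q : Set (Finset α)).PairwiseDisjoint id)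
    (hQcover : Q.biUnion id = V1)
    (hrefine : ∀ Y ∈ Q, ∃ X ∈ P, Y ⊆ X)
    (hgood : (1 - ε) * (V1.card : ℝ) ≤
      (((P.filter (AlmostGood E V2 V3 ε)).biUnion id).card : ℝ)) :
    (1 - ε ^ ((1:ℝ)/4)) * (V1.card : ℝ) ≤
      (((Q.filter (AlmostGood E V2 V3 (ε ^ ((1:ℝ)/4)))).biUnion id).card : ℝ) := by
  set δ := ε ^ ((1 : ℝ) / 4) with hδ
  have hδ0 : 0 < δ := by positivity
  have hεδ : ε = δ ^ 4 := by
    rw [hδ, ← Real.rpow_natCast, ← Real.rpow_mul hε0.le]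
    norm_num
  have hV1 : (#V1 : ℝ) = ∑ Y ∈ Q, (#Y : ℝ) := hQcover ▸ cast_card_biUnion_id hQdisj
  rcases lt_or_ge (1 / 2) δ with hδ2 | hδ2
  · rw [filter_true_of_mem fun Y _ => almostGood_of_half_lt hδ2, hQcover]
    nlinarith [(Nat.cast_nonneg #V1 : (0 : ℝ) ≤ #V1)]
  have hbad := sum_card_not_almostGood_le_of_refines hε0.le hδ0 hPdisj hPcover hQdisj hrefine hgood
  have hsplit := sum_filter_add_sum_filter_not Q (AlmostGood E V2 V3 δ) fun Y => (#Y : ℝ)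
  have hcoef : ε * (1 + δ) / δ ^ 2 + ε ≤ δ := by
    rw [hεδ, div_add' _ _ _ (by positivity), div_le_iff₀ (by positivity)]
    nlinarith [pow_pos hδ0 3, pow_pos hδ0 4, pow_pos hδ0 5]
  rw [cast_card_biUnion_id (hQdisj.subset (coe_subset.2 (filter_subset _ _)))]
  nlinarith [mul_le_mul_of_nonneg_right hcoef (Nat.cast_nonneg #V1 : (0 : ℝ) ≤ #V1)]

/-- Lemma 4.6: if `𝒫` is an almost `ε`-good partition of `V₁`
with respect to a tripartite 3-graph `H`, then any refinement `𝒬` of `𝒫` is an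
almost `ε^(1/4)`-good partition of `V₁` (in particular almost `√ε`-good). -/
theorem stmt_5 {α : Type*} [DecidableEq α] (ε : ℝ) (hε0 : 0 < ε) (hε1 : ε < 1)
    (V1 V2 V3 : Finset α)
    (h12 : Disjoint V1 V2) (h13 : Disjoint V1 V3) (h23 : Disjoint V2 V3)
    (E : α → α → α → Prop)
    (P Q : Finset (Finset α))
    (hPdisj : (P : Set (Finset α)).PairwiseDisjoint id)
    (hPcover : P.biUnion id = V1) (hPne : ∀ X ∈ P, X.Nonempty)
    (hQdisj : (Q : Set (Finset α)).PairwiseDisjoint id)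
    (hQcover : Q.biUnion id = V1) (hQne : ∀ X ∈ Q, X.Nonempty)
    (hrefine : ∀ Y ∈ Q, ∃ X ∈ P, Y ⊆ X)
    (hgood : (1 - ε) * (V1.card : ℝ) ≤
      (((P.filter (AlmostGood E V2 V3 ε)).biUnion id).card : ℝ)) :
    (1 - ε ^ ((1:ℝ)/4)) * (V1.card : ℝ) ≤
      (((Q.filter (AlmostGood E V2 V3 (ε ^ ((1:ℝ)/4)))).biUnion id).card : ℝ) :=
  stmt_5_general ε hε0 V1 V2 V3 E P Q hPdisj hPcover hQdisj hQcover hrefine hgood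
end
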